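/- For every nonnegative integer n, the sum over k from 0 to n of binom(2k,k)^2 / ((2(n+k)+1) * 16^k) equals (binom(2n,n)^2 / 16^n) times the sum over k from 0 to 2n of 1/(2k+1). -/

import Mathlib

/-!
Let `g n k` be the summand. Gosper's algorithm finds the certificate `4 k² g n k`:
`g (n+1) k = ((2n+1)/(2n+2))² g n k + Δₖ(4 k² g n k) / (2n+2)²`.
Summing over `k` telescopes, so both sides satisfy the same first-order recurrence in `n`
and agree at `n = 0`.
-/

open Finset

def sunTerm (n k : ℕ) : ℚ :=
  ((2 * k).choose k : ℚ) ^ 2 / (((2 * (n + k) + 1 : ℕ) : ℚ) * 16 ^ k)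

def sunClosedForm (n : ℕ) : ℚ :=
  ((2 * n).choose n : ℚ) ^ 2 / 16 ^ n * ∑ k ∈ range (2 * n + 1), 1 / ((2 * k + 1 : ℕ) : ℚ)

def sunCertificate (n k : ℕ) : ℚ := 4 * (k : ℚ) ^ 2 * sunTerm n k

theorem cast_choose_two_mul_succ {K : Type*} [Field K] [CharZero K] (k : ℕ) :
    ((2 * (k + 1)).choose (k + 1) : K) = 2 * (2 * k + 1) / (k + 1) * (2 * k).choose k := by
  have h := Nat.succ_mul_centralBinom_succ k
  simp only [Nat.centralBinom_eq_two_mul_choose] at h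
  rw [div_mul_eq_mul_div, eq_div_iff (Nat.cast_add_one_ne_zero k)]
  exact_mod_cast (mul_comm _ _).trans h

theorem sunTerm_succ_left (n k : ℕ) :
    sunTerm (n + 1) k = ((2 * n + 1) / (2 * n + 2)) ^ 2 * sunTerm n k
      + (sunCertificate n (k + 1) - sunCertificate n k) / (2 * n + 2) ^ 2 := by
  simp only [sunCertificate, sunTerm, cast_choose_two_mul_succ k]
  push_cast
  field_simp
  ring

theorem sum_sunTerm_succ_left (n : ℕ) :
    ∑ k ∈ range (n + 2), sunTerm (n + 1) k
      = ((2 * n + 1) / (2 * n + 2)) ^ 2 * ∑ k ∈ range (n + 1), sunTerm n k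
        + sunTerm n (n + 1) + sunTerm (n + 1) (n + 1) := by
  have hcert : sunCertificate n (n + 1) / (2 * n + 2) ^ 2 = sunTerm n (n + 1) := by
    rw [sunCertificate, div_eq_iff (by positivity)]
    push_cast
    ring
  rw [sum_range_succ, sum_congr rfl fun k _ => sunTerm_succ_left n k, sum_add_distrib,
    ← mul_sum, ← sum_div, sum_range_sub, ← hcert]
  simp [sunCertificate]

theorem sunClosedForm_succ (n : ℕ) :
    sunClosedForm (n + 1) = ((2 * n + 1) / (2 * n + 2)) ^ 2 * sunClosedForm n
      + sunTerm n (n + 1) + sunTerm (n + 1) (n + 1) := by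
  rw [sunClosedForm, show 2 * (n + 1) + 1 = 2 * n + 1 + 1 + 1 by ring, sum_range_succ,
    sum_range_succ, sunClosedForm]
  simp only [sunTerm, cast_choose_two_mul_succ n]
  push_cast
  field_simp
  ring

/-- For every nonnegative integer `n`,
`∑_{k=0}^n C(2k,k)^2 / ((2(n+k)+1) * 16^k)
  = (C(2n,n)^2 / 16^n) * ∑_{k=0}^{2n} 1/(2k+1)`. -/
theorem sun_lemma_2_5 (n : ℕ) :
    (∑ k ∈ Finset.range (n + 1),
        ((2 * k).choose k : ℚ) ^ 2 / (((2 * (n + k) + 1 : ℕ) : ℚ) * 16 ^ k))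
      = (((2 * n).choose n : ℚ) ^ 2 / 16 ^ n)
        * (∑ k ∈ Finset.range (2 * n + 1), (1 : ℚ) / ((2 * k + 1 : ℕ) : ℚ)) := by
  change ∑ k ∈ range (n + 1), sunTerm n k = sunClosedForm n
  induction n with
  | zero => norm_num [sunTerm, sunClosedForm]
  | succ n ih => rw [sum_sunTerm_succ_left, ih, sunClosedForm_succ]
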